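/- arXiv:2403.02317 — 2 statements merged into one kernel-verified Lean document; each statement's English description precedes it below -/
import Mathlib

section
/- For a box with cost $c > 0$, prizes with probabilities $p_j$ and affine agent values $v_j(\alpha) = a_j + \alpha b_j$ with $a_j, b_j \geq 0$, the fair cap function $\varphi : [0,1] \to \mathbb{R}$ defined by $\sum_j p_j \max\{0, v_j(\alpha) - \varphi(\alpha)\} = c$ is monotone non-decreasing and convex. -/
open Finset

/-! The fair cap `φ α` is the level-`c` point of the expected surplus
`t ↦ ∑ j, p j * max 0 (v j - t)`, which is non-increasing in `t` and strictly decreasing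
while positive. Raising the values raises the surplus, so the cap must rise too. The surplus
is jointly convex in the values and the cap, and the values are affine in `α`; so at a convex
combination of parameters the combined cap leaves surplus at most `c`, hence lies above the
fair cap there. -/

section Surplus

variable {ι : Type*} [Fintype ι] {p : ι → ℝ}

def surplus (p v : ι → ℝ) (t : ℝ) : ℝ := ∑ j, p j * max 0 (v j - t)

theorem surplus_le_surplus_of_le (hp : ∀ j, 0 ≤ p j) {v w : ι → ℝ} (hvw : v ≤ w) (t : ℝ) :
    surplus p v t ≤ surplus p w t :=
  sum_le_sum fun j _ => mul_le_mul_of_nonneg_left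
    (max_le_max le_rfl (sub_le_sub_right (hvw j) t)) (hp j)

theorem surplus_lt_surplus_of_lt (hp : ∀ j, 0 ≤ p j) (v : ι → ℝ) {t φ : ℝ} (htφ : t < φ)
    (hpos : 0 < surplus p v φ) : surplus p v φ < surplus p v t := by
  obtain ⟨j, -, hj⟩ := exists_lt_of_sum_lt (s := univ) (f := fun _ => 0)
    (g := fun j => p j * max 0 (v j - φ)) (by rw [sum_const_zero]; exact hpos)
  have hpj : 0 < p j := lt_of_le_of_ne (hp j) fun h => by simp [← h] at hj
  have hvj : φ < v j := by
    by_contra! h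
    simp [max_eq_left (sub_nonpos.mpr h)] at hj
  refine sum_lt_sum (fun i _ => mul_le_mul_of_nonneg_left
    (max_le_max le_rfl (by linarith)) (hp i)) ⟨j, mem_univ j, ?_⟩
  refine mul_lt_mul_of_pos_left ?_ hpj
  rw [max_eq_right (by linarith)]
  exact lt_of_lt_of_le (by linarith) (le_max_right _ _)

theorem max_zero_add_le {s t : ℝ} (hs : 0 ≤ s) (ht : 0 ≤ t) (x y : ℝ) :
    max 0 (s * x + t * y) ≤ s * max 0 x + t * max 0 y :=
  max_le (by positivity)
    (add_le_add (mul_le_mul_of_nonneg_left (le_max_right _ _) hs)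
      (mul_le_mul_of_nonneg_left (le_max_right _ _) ht))

theorem surplus_add_smul_le (hp : ∀ j, 0 ≤ p j) {s t : ℝ} (hs : 0 ≤ s) (ht : 0 ≤ t)
    (v w : ι → ℝ) (φ ψ : ℝ) :
    surplus p (s • v + t • w) (s * φ + t * ψ) ≤ s * surplus p v φ + t * surplus p w ψ := by
  calc surplus p (s • v + t • w) (s * φ + t * ψ)
      ≤ ∑ j, p j * (s * max 0 (v j - φ) + t * max 0 (w j - ψ)) := by
        refine sum_le_sum fun j _ => mul_le_mul_of_nonneg_left ?_ (hp j)
        rw [show (s • v + t • w) j - (s * φ + t * ψ) = s * (v j - φ) + t * (w j - ψ) by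
          simp only [Pi.add_apply, Pi.smul_apply, smul_eq_mul]; ring]
        exact max_zero_add_le hs ht _ _
      _ = s * surplus p v φ + t * surplus p w ψ := by
        simp only [surplus, mul_sum, ← sum_add_distrib]
        exact sum_congr rfl fun j _ => by ring

end Surplus

theorem fair_cap_monotone_convex_general (m : ℕ) (p a b : Fin m → ℝ)
    (hp : ∀ j, 0 ≤ p j)
    (hb : ∀ j, 0 ≤ b j)
    (c : ℝ) (hc : 0 < c) (φ : ℝ → ℝ)
    (hfair : ∀ α ∈ Set.Icc (0:ℝ) 1, ∑ j, p j * max 0 (a j + α * b j - φ α) = c) :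
    MonotoneOn φ (Set.Icc (0:ℝ) 1) ∧ ConvexOn ℝ (Set.Icc (0:ℝ) 1) φ := by
  set v : ℝ → Fin m → ℝ := fun α j => a j + α * b j
  have hfair' : ∀ α ∈ Set.Icc (0:ℝ) 1, surplus p (v α) (φ α) = c := hfair
  have cap_le : ∀ α ∈ Set.Icc (0:ℝ) 1, ∀ t, surplus p (v α) t ≤ c → φ α ≤ t :=
    fun α hα t ht => le_of_not_gt fun htφ =>
      (surplus_lt_surplus_of_lt hp (v α) htφ ((hfair' α hα).symm ▸ hc)).not_ge
        (hfair' α hα ▸ ht)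
  refine ⟨fun x hx y hy hxy => cap_le x hx (φ y) ?_, convex_Icc 0 1, ?_⟩
  · exact hfair' y hy ▸ surplus_le_surplus_of_le hp
      (fun j => by simp only [v]; nlinarith [hb j]) (φ y)
  · intro x hx y hy s t hs ht hst
    have hv : v (s * x + t * y) = s • v x + t • v y := by
      funext j
      simp only [v, Pi.add_apply, Pi.smul_apply, smul_eq_mul]
      linear_combination (-a j) * hst
    apply cap_le _ ((convex_Icc (0:ℝ) 1) hx hy hs ht hst)
    calc surplus p (v (s • x + t • y)) (s • φ x + t • φ y)
        ≤ s * surplus p (v x) (φ x) + t * surplus p (v y) (φ y) :=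
          hv ▸ surplus_add_smul_le hp hs ht (v x) (v y) (φ x) (φ y)
      _ = c := by rw [hfair' x hx, hfair' y hy, ← add_mul, hst, one_mul]

/-- the fair cap `φ(α)` of a box under a linear contract is monotone
non-decreasing and convex on `[0,1]`. -/
theorem fair_cap_monotone_convex (m : ℕ) (p a b : Fin m → ℝ)
    (hp : ∀ j, 0 ≤ p j) (hpsum : ∑ j, p j = 1)
    (ha : ∀ j, 0 ≤ a j) (hb : ∀ j, 0 ≤ b j)
    (c : ℝ) (hc : 0 < c) (φ : ℝ → ℝ)
    (hfair : ∀ α ∈ Set.Icc (0:ℝ) 1, ∑ j, p j * max 0 (a j + α * b j - φ α) = c) :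
    MonotoneOn φ (Set.Icc (0:ℝ) 1) ∧ ConvexOn ℝ (Set.Icc (0:ℝ) 1) φ :=
  fair_cap_monotone_convex_general m p a b hp hb c hc φ hfair
end

section
/- Under the same setup, the fair cap function $\varphi : [0,1] \to \mathbb{R}$ is piecewise linear with at most $2m+1$ affine segments; equivalently, the set of breakpoints of $\varphi$ on $[0,1]$ has cardinality at most $2m$. -/
/-! At each `α` the cap `φ α` lies on the line `capLine J` of its active set `J` (the indices
paying a positive amount), and above the line of every index set of positive mass. So `φ` is the
upper envelope of finitely many lines: it is continuous, and it is convex, which makes the set of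
parameters at which index `j` is active an interval. Only the `2m` endpoints of these intervals
can change the active set; between them `φ` follows a single line. -/

open Finset

theorem Finset.sum_mul_sub_const {ι : Type*} (J : Finset ι) (p x : ι → ℝ) (v : ℝ) :
    ∑ j ∈ J, p j * (x j - v) = ∑ j ∈ J, p j * x j - (∑ j ∈ J, p j) * v := by
  simp only [mul_sub, sum_sub_distrib, sum_mul]

theorem convexOn_of_affine_minorant {s : Set ℝ} (hs : Convex ℝ s) {f : ℝ → ℝ}
    (hf : ∀ x ∈ s, ∃ A B : ℝ, (∀ y ∈ s, A * y + B ≤ f y) ∧ A * x + B = f x) :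
    ConvexOn ℝ s f := by
  refine ⟨hs, fun x hx y hy μ ν hμ hν hμν => ?_⟩
  obtain ⟨A, B, hle, heq⟩ := hf _ (hs hx hy hμ hν hμν)
  rw [← heq, smul_eq_mul, smul_eq_mul, smul_eq_mul, smul_eq_mul]
  calc A * (μ * x + ν * y) + B = μ * (A * x + B) + ν * (A * y + B) := by
        linear_combination B * hμν.symm
    _ ≤ μ * f x + ν * f y := by gcongr; exacts [hle x hx, hle y hy]

theorem Set.OrdConnected.setOf_lt_of_affine_minorant {s : Set ℝ} (hs : s.OrdConnected) {f : ℝ → ℝ}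
    (hf : ∀ x ∈ s, ∃ A B : ℝ, (∀ y ∈ s, A * y + B ≤ f y) ∧ A * x + B = f x) (d e : ℝ) :
    {x ∈ s | f x < d * x + e}.OrdConnected := by
  have hconv : ConvexOn ℝ s fun x => f x - (d * x + e) := by
    refine convexOn_of_affine_minorant hs.convex fun x hx => ?_
    obtain ⟨A, B, hle, heq⟩ := hf x hx
    exact ⟨A - d, B - e, fun y hy => by linarith [hle y hy], by linarith⟩
  simpa only [sub_neg] using (hconv.convex_lt 0).ordConnected

theorem Set.OrdConnected.mem_iff_mem_of_notMem_Ioo {α : Type*}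
    [ConditionallyCompleteLinearOrder α] {S : Set α} (hS : S.OrdConnected) (hbdd : BddBelow S)
    (hbdd' : BddAbove S) {x y u v : α} (hinf : sInf S ∉ Set.Ioo x y) (hsup : sSup S ∉ Set.Ioo x y)
    (hu : u ∈ Set.Ioo x y) (hv : v ∈ Set.Ioo x y) : u ∈ S ↔ v ∈ S := by
  suffices key : ∀ u ∈ Set.Ioo x y, ∀ v ∈ Set.Ioo x y, u ∈ S → v ∈ S from
    ⟨key u hu v hv, key v hv u hu⟩
  intro u hu v hv huS
  by_contra hvS
  rcases lt_or_gt_of_ne (ne_of_mem_of_not_mem huS hvS) with huv | hvu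
  · have hle : ∀ w ∈ S, w ≤ v := fun w hw =>
      le_of_not_ge fun hvw => hvS (hS.out huS hw ⟨huv.le, hvw⟩)
    exact hsup ⟨hu.1.trans_le (le_csSup hbdd' huS), (csSup_le ⟨u, huS⟩ hle).trans_lt hv.2⟩
  · have hge : ∀ w ∈ S, v ≤ w := fun w hw =>
      le_of_not_ge fun hwv => hvS (hS.out hw huS ⟨hwv, hvu.le⟩)
    exact hinf ⟨hv.1.trans_le (le_csInf ⟨u, huS⟩ hge), (csInf_le hbdd huS).trans_lt hu.2⟩

noncomputable section

namespace FairCap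

open Set

variable {ι : Type*} {p a b : ι → ℝ} {c : ℝ}

/-- The solution `v` of `∑ j ∈ J, p j * (a j + α * b j - v) = c`. -/
def capLine (p a b : ι → ℝ) (c : ℝ) (J : Finset ι) (α : ℝ) : ℝ :=
  (∑ j ∈ J, p j * (a j + α * b j) - c) / ∑ j ∈ J, p j

theorem exists_capLine_eq_affine (p a b : ι → ℝ) (c : ℝ) (J : Finset ι) :
    ∃ A B : ℝ, ∀ α, capLine p a b c J α = A * α + B := by
  refine ⟨(∑ j ∈ J, p j * b j) / ∑ j ∈ J, p j, (∑ j ∈ J, p j * a j - c) / ∑ j ∈ J, p j,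
    fun α => ?_⟩
  simp only [capLine, mul_add, sum_add_distrib, mul_left_comm _ α, ← mul_sum]
  ring

theorem continuous_capLine (p a b : ι → ℝ) (c : ℝ) (J : Finset ι) :
    Continuous (capLine p a b c J) := by
  unfold capLine
  fun_prop

variable [Fintype ι]

def activeSet (a b : ι → ℝ) (α v : ℝ) : Finset ι := {j | v < a j + α * b j}

theorem sum_mul_max_eq_sum_activeSet (p a b : ι → ℝ) (α v : ℝ) :
    ∑ j, p j * max 0 (a j + α * b j - v) = ∑ j ∈ activeSet a b α v, p j * (a j + α * b j - v) := by
  rw [activeSet, sum_filter]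
  refine sum_congr rfl fun j _ => ?_
  split_ifs with h
  · rw [max_eq_right (by linarith)]
  · rw [max_eq_left (by linarith), mul_zero]

theorem capLine_le_of_fair (hp : ∀ j, 0 ≤ p j) {α v : ℝ}
    (hfair : ∑ j, p j * max 0 (a j + α * b j - v) = c) {J : Finset ι}
    (hJ : 0 < ∑ j ∈ J, p j) : capLine p a b c J α ≤ v := by
  have hsum : ∑ j ∈ J, p j * (a j + α * b j - v) ≤ c := calc
    _ ≤ ∑ j ∈ J, p j * max 0 (a j + α * b j - v) :=
      sum_le_sum fun j _ => mul_le_mul_of_nonneg_left (le_max_right _ _) (hp j)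
    _ ≤ ∑ j, p j * max 0 (a j + α * b j - v) :=
      sum_le_sum_of_subset_of_nonneg (subset_univ J) fun j _ _ =>
        mul_nonneg (hp j) (le_max_left _ _)
    _ = c := hfair
  rw [capLine, div_le_iff₀ hJ]
  linarith [sum_mul_sub_const J p (fun j => a j + α * b j) v]

theorem sum_activeSet_pos_of_fair (hp : ∀ j, 0 ≤ p j) (hc : 0 < c) {α v : ℝ}
    (hfair : ∑ j, p j * max 0 (a j + α * b j - v) = c) :
    0 < ∑ j ∈ activeSet a b α v, p j := by
  refine (sum_nonneg fun j _ => hp j).lt_of_ne fun hzero => hc.ne ?_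
  have hp0 := (sum_eq_zero_iff_of_nonneg fun j _ => hp j).1 hzero.symm
  rw [← hfair, sum_mul_max_eq_sum_activeSet]
  exact (sum_eq_zero fun j hj => by rw [hp0 j hj, zero_mul]).symm

theorem eq_capLine_activeSet_of_fair (hp : ∀ j, 0 ≤ p j) (hc : 0 < c) {α v : ℝ}
    (hfair : ∑ j, p j * max 0 (a j + α * b j - v) = c) :
    v = capLine p a b c (activeSet a b α v) α := by
  rw [capLine, eq_div_iff (sum_activeSet_pos_of_fair hp hc hfair).ne']
  rw [sum_mul_max_eq_sum_activeSet, sum_mul_sub_const] at hfair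
  linarith

variable {φ : ℝ → ℝ} {s : Set ℝ}

theorem exists_affine_minorant_of_fair (hp : ∀ j, 0 ≤ p j) (hc : 0 < c)
    (hfair : ∀ α ∈ s, ∑ j, p j * max 0 (a j + α * b j - φ α) = c) :
    ∀ x ∈ s, ∃ A B : ℝ, (∀ y ∈ s, A * y + B ≤ φ y) ∧ A * x + B = φ x := by
  intro x hx
  obtain ⟨A, B, hAB⟩ := exists_capLine_eq_affine p a b c (activeSet a b x (φ x))
  refine ⟨A, B, fun y hy => ?_, ?_⟩ <;> rw [← hAB]
  · exact capLine_le_of_fair hp (hfair y hy) (sum_activeSet_pos_of_fair hp hc (hfair x hx))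
  · exact (eq_capLine_activeSet_of_fair hp hc (hfair x hx)).symm

theorem continuousOn_of_fair (hp : ∀ j, 0 ≤ p j) (hc : 0 < c)
    (hfair : ∀ α ∈ s, ∑ j, p j * max 0 (a j + α * b j - φ α) = c) : ContinuousOn φ s := by
  intro x hx
  set 𝒥 : Finset (Finset ι) := {J | 0 < ∑ j ∈ J, p j}
  have mem_𝒥 : ∀ α ∈ s, activeSet a b α (φ α) ∈ 𝒥 := fun α hα =>
    mem_filter.2 ⟨mem_univ _, sum_activeSet_pos_of_fair hp hc (hfair α hα)⟩
  have hEnvelope : EqOn (fun α => 𝒥.sup' ⟨_, mem_𝒥 x hx⟩ fun J => capLine p a b c J α) φ s :=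
    fun α hα => le_antisymm
      (sup'_le _ _ fun J hJ => capLine_le_of_fair hp (hfair α hα) (mem_filter.1 hJ).2)
      ((eq_capLine_activeSet_of_fair hp hc (hfair α hα)).trans_le
        (le_sup' (fun J => capLine p a b c J α) (mem_𝒥 α hα)))
  exact ((Continuous.finset_sup'_apply _ fun J _ => continuous_capLine p a b c J).continuousOn.congr
    hEnvelope.symm) x hx

theorem ordConnected_setOf_lt_of_fair (hs : s.OrdConnected) (hp : ∀ j, 0 ≤ p j) (hc : 0 < c)
    (hfair : ∀ α ∈ s, ∑ j, p j * max 0 (a j + α * b j - φ α) = c) (j : ι) :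
    {α ∈ s | φ α < a j + α * b j}.OrdConnected := by
  simpa only [add_comm (a j), mul_comm (b j)] using
    hs.setOf_lt_of_affine_minorant (exists_affine_minorant_of_fair hp hc hfair) (b j) (a j)

theorem exists_affine_on_Icc_of_activeSet_eq (hp : ∀ j, 0 ≤ p j) (hc : 0 < c) {x y : ℝ}
    (hxy : x < y) (hfair : ∀ α ∈ Icc x y, ∑ j, p j * max 0 (a j + α * b j - φ α) = c)
    {J : Finset ι} (hJ : ∀ t ∈ Ioo x y, activeSet a b t (φ t) = J) :
    ∃ A B : ℝ, ∀ t ∈ Icc x y, φ t = A * t + B := by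
  have hIoo : EqOn φ (capLine p a b c J) (Ioo x y) := fun t ht => by
    rw [← hJ t ht]
    exact eq_capLine_activeSet_of_fair hp hc (hfair t (Ioo_subset_Icc_self ht))
  have hIcc : EqOn φ (capLine p a b c J) (Icc x y) :=
    hIoo.of_subset_closure (continuousOn_of_fair hp hc hfair)
      (continuous_capLine p a b c J).continuousOn Ioo_subset_Icc_self (closure_Ioo hxy.ne).superset
  obtain ⟨A, B, hAB⟩ := exists_capLine_eq_affine p a b c J
  exact ⟨A, B, fun t ht => (hIcc ht).trans (hAB t)⟩

end FairCap

end

theorem fair_cap_piecewise_linear_segments_general (m : ℕ) (p a b : Fin m → ℝ)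
    (hp : ∀ j, 0 ≤ p j)
    (c : ℝ) (hc : 0 < c) (φ : ℝ → ℝ)
    (hfair : ∀ α ∈ Set.Icc (0:ℝ) 1, ∑ j, p j * max 0 (a j + α * b j - φ α) = c) :
    ∃ s : Finset ℝ, s.card ≤ 2 * m ∧
      ∀ x y : ℝ, x ∈ Set.Icc (0:ℝ) 1 → y ∈ Set.Icc (0:ℝ) 1 → x < y →
        (∀ z ∈ s, z ∉ Set.Ioo x y) →
        ∃ A B : ℝ, ∀ t ∈ Set.Icc x y, φ t = A * t + B := by
  set I : Fin m → Set ℝ := fun j => {α ∈ Set.Icc 0 1 | φ α < a j + α * b j}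
  refine ⟨univ.image (fun j => sInf (I j)) ∪ univ.image (fun j => sSup (I j)), ?_, ?_⟩
  · calc _ ≤ m + m := (card_union_le _ _).trans
          (add_le_add (card_image_le.trans (by simp)) (card_image_le.trans (by simp)))
      _ = 2 * m := (two_mul m).symm
  intro x y hx hy hxy hs
  have hsub : Set.Icc x y ⊆ Set.Icc 0 1 := Set.Icc_subset_Icc hx.1 hy.2
  have hmid : (x + y) / 2 ∈ Set.Ioo x y := ⟨by linarith, by linarith⟩
  refine FairCap.exists_affine_on_Icc_of_activeSet_eq hp hc hxy (fun t ht => hfair t (hsub ht))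
    (J := FairCap.activeSet a b ((x + y) / 2) (φ ((x + y) / 2))) fun t ht => ?_
  ext j
  have hI := (FairCap.ordConnected_setOf_lt_of_fair Set.ordConnected_Icc hp hc hfair j
    ).mem_iff_mem_of_notMem_Ioo ⟨0, fun _ h => h.1.1⟩ ⟨1, fun _ h => h.1.2⟩
    (hs _ (mem_union_left _ (mem_image_of_mem (fun j => sInf (I j)) (mem_univ j))))
    (hs _ (mem_union_right _ (mem_image_of_mem (fun j => sSup (I j)) (mem_univ j)))) ht hmid
  simp only [Set.mem_ofPred_eq, hsub (Set.Ioo_subset_Icc_self ht),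
    hsub (Set.Ioo_subset_Icc_self hmid), true_and] at hI
  simpa [FairCap.activeSet] using hI

/-- the fair cap `φ(α)` is piecewise linear on `[0,1]` with at most
`2m+1` affine segments, i.e., at most `2m` breakpoints. -/
theorem fair_cap_piecewise_linear_segments (m : ℕ) (p a b : Fin m → ℝ)
    (hp : ∀ j, 0 ≤ p j) (hpsum : ∑ j, p j = 1)
    (ha : ∀ j, 0 ≤ a j) (hb : ∀ j, 0 ≤ b j)
    (c : ℝ) (hc : 0 < c) (φ : ℝ → ℝ)
    (hfair : ∀ α ∈ Set.Icc (0:ℝ) 1, ∑ j, p j * max 0 (a j + α * b j - φ α) = c) :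
    ∃ s : Finset ℝ, s.card ≤ 2 * m ∧
      ∀ x y : ℝ, x ∈ Set.Icc (0:ℝ) 1 → y ∈ Set.Icc (0:ℝ) 1 → x < y →
        (∀ z ∈ s, z ∉ Set.Ioo x y) →
        ∃ A B : ℝ, ∀ t ∈ Set.Icc x y, φ t = A * t + B :=
  fair_cap_piecewise_linear_segments_general m p a b hp c hc φ hfair
end
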